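/- arXiv:2201.07346 — 2 statements merged into one kernel-verified Lean document; each statement's English description precedes it below -/
import Mathlib

section
/- There do not exist prime numbers p, p1, p2, p3, p4 satisfying p³ = p1³ + p2³ + p3³ + p4³. -/
private lemma odd_ne_two {n : ℕ} (h : Odd n) : n ≠ 2 := by
  rintro rfl; simpa using Nat.odd_iff.mp h

private lemma prime_ge5 {n : ℕ} (hp : n.Prime) (h2 : n ≠ 2) (h3 : n ≠ 3) : 5 ≤ n := by
  have ho : n % 2 = 1 := Nat.odd_iff.mp (hp.odd_of_ne_two h2)
  have := hp.two_le
  omega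

private lemma cube_mod9 {q : ℕ} (h : q % 3 ≠ 0) : q ^ 3 % 9 = 1 ∨ q ^ 3 % 9 = 8 := by
  have h13 : q % 3 = 1 ∨ q % 3 = 2 := by omega
  rcases h13 with h1 | h1
  · obtain ⟨k, hk⟩ : ∃ k, q = 3 * k + 1 := ⟨q / 3, by omega⟩
    left
    have : q ^ 3 = 9 * (3 * k ^ 3 + 3 * k ^ 2 + k) + 1 := by subst hk; ring
    omega
  · obtain ⟨k, hk⟩ : ∃ k, q = 3 * k + 2 := ⟨q / 3, by omega⟩
    right
    have : q ^ 3 = 9 * (3 * k ^ 3 + 6 * k ^ 2 + 4 * k) + 8 := by subst hk; ring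
    omega

private lemma cube_mod7 (q : ℕ) : q ^ 3 % 7 = 0 ∨ q ^ 3 % 7 = 1 ∨ q ^ 3 % 7 = 6 := by
  have h := Nat.pow_mod q 3 7
  have h7 : q % 7 = 0 ∨ q % 7 = 1 ∨ q % 7 = 2 ∨ q % 7 = 3 ∨ q % 7 = 4 ∨ q % 7 = 5 ∨
      q % 7 = 6 := by omega
  rcases h7 with h7|h7|h7|h7|h7|h7|h7 <;> rw [h7] at h <;> norm_num at h <;> rw [h] <;> norm_num

private lemma mod9key (P A B C : ℕ)
    (hP : P % 9 = 1 ∨ P % 9 = 8) (hA : A % 9 = 1 ∨ A % 9 = 8)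
    (hB : B % 9 = 1 ∨ B % 9 = 8) (hC : C % 9 = 1 ∨ C % 9 = 8)
    (h : P = A + B + C + 8) : False := by omega

private lemma mod7key (P A B : ℕ)
    (hP : P % 7 = 0 ∨ P % 7 = 1 ∨ P % 7 = 6)
    (hA : A % 7 = 0 ∨ A % 7 = 1 ∨ A % 7 = 6)
    (hB : B % 7 = 0 ∨ B % 7 = 1 ∨ B % 7 = 6)
    (h : P = A + B + 35) : P % 7 = 0 ∨ A % 7 = 0 ∨ B % 7 = 0 := by omega

private lemma lt_of_cube_lt {a b : ℕ} (h : a ^ 3 < b ^ 3) : a < b := by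
  by_contra hc
  push_neg at hc
  exact absurd (Nat.pow_le_pow_left hc 3) (by omega)

/-- no prime cube equals q^3 + 24 with q an odd prime -/
private lemma L24 {p q : ℕ} (hp : p.Prime) (hq : q.Prime) (hq2 : q ≠ 2)
    (h : p ^ 3 = q ^ 3 + 24) : False := by
  have hq3 : 3 ≤ q := by have := hq.two_le; omega
  have hqo : q % 2 = 1 := Nat.odd_iff.mp (hq.odd_of_ne_two hq2)
  have hp2 : p ≠ 2 := by rintro rfl; norm_num at h
  have hpo : p % 2 = 1 := Nat.odd_iff.mp (hp.odd_of_ne_two hp2)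
  have hlt : q < p := lt_of_cube_lt (by omega)
  have hge : q + 2 ≤ p := by omega
  have h2 : (q + 2) ^ 3 ≤ p ^ 3 := Nat.pow_le_pow_left hge 3
  nlinarith

private lemma L62 {p q : ℕ} (hp : p.Prime) (hq : q.Prime) (hq2 : q ≠ 2) (hq3 : q ≠ 3)
    (h : p ^ 3 = q ^ 3 + 62) : False := by
  have hq5 : 5 ≤ q := prime_ge5 hq hq2 hq3
  have hqo : q % 2 = 1 := Nat.odd_iff.mp (hq.odd_of_ne_two hq2)
  have hp2 : p ≠ 2 := by rintro rfl; norm_num at h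
  have hpo : p % 2 = 1 := Nat.odd_iff.mp (hp.odd_of_ne_two hp2)
  have hlt : q < p := lt_of_cube_lt (by omega)
  have hge : q + 2 ≤ p := by omega
  have h2 : (q + 2) ^ 3 ≤ p ^ 3 := Nat.pow_le_pow_left hge 3
  nlinarith

private lemma L378 {p q : ℕ} (hp : p.Prime) (hq : q.Prime) (hq2 : q ≠ 2) (hq3 : q ≠ 3)
    (h : p ^ 3 = q ^ 3 + 378) : False := by
  have hq5 : 5 ≤ q := prime_ge5 hq hq2 hq3
  have hqo : q % 2 = 1 := Nat.odd_iff.mp (hq.odd_of_ne_two hq2)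
  have hp2 : p ≠ 2 := by rintro rfl; norm_num at h
  have hpo : p % 2 = 1 := Nat.odd_iff.mp (hp.odd_of_ne_two hp2)
  have hlt : q < p := lt_of_cube_lt (by omega)
  have hge : q + 2 ≤ p := by omega
  have h2 : (q + 2) ^ 3 ≤ p ^ 3 := Nat.pow_le_pow_left hge 3
  rcases le_or_gt q 7 with hb | hb
  · have : q = 5 ∨ q = 7 := by omega
    rcases this with rfl | rfl
    · -- p^3 = 503
      norm_num at h
      rcases le_or_gt p 7 with h7 | h7
      · have := Nat.pow_le_pow_left h7 3; norm_num at this; omega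
      · have : 8 ≤ p := h7
        have := Nat.pow_le_pow_left this 3; norm_num at this; omega
    · -- p^3 = 721
      norm_num at h
      rcases le_or_gt p 8 with h7 | h7
      · have := Nat.pow_le_pow_left h7 3; norm_num at this; omega
      · have : 9 ≤ p := h7
        have := Nat.pow_le_pow_left this 3; norm_num at this; omega
  · have hb8 : 8 ≤ q := hb
    nlinarith

private lemma L35 {p a b : ℕ} (hp : p.Prime) (ha : a.Prime) (hb : b.Prime)
    (ha2 : a ≠ 2) (ha3 : a ≠ 3) (hb2 : b ≠ 2) (hb3 : b ≠ 3)
    (h : p ^ 3 = a ^ 3 + b ^ 3 + 35) : False := by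
  have ha5 : 5 ≤ a := prime_ge5 ha ha2 ha3
  have hb5 : 5 ≤ b := prime_ge5 hb hb2 hb3
  have ha125 : 125 ≤ a ^ 3 := by calc (125:ℕ) = 5 ^ 3 := by norm_num
                                     _ ≤ a ^ 3 := Nat.pow_le_pow_left ha5 3
  have hb125 : 125 ≤ b ^ 3 := by calc (125:ℕ) = 5 ^ 3 := by norm_num
                                     _ ≤ b ^ 3 := Nat.pow_le_pow_left hb5 3
  have key := mod7key (p ^ 3) (a ^ 3) (b ^ 3) (cube_mod7 p) (cube_mod7 a) (cube_mod7 b) h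
  rcases key with k | k | k
  · -- 7 ∣ p, so p = 7
    have h7 : (7:ℕ) ∣ p := (by norm_num : Nat.Prime 7).dvd_of_dvd_pow
      (Nat.dvd_of_mod_eq_zero k)
    have hp7 : p = 7 := ((Nat.prime_dvd_prime_iff_eq (by norm_num) hp).mp h7).symm
    subst hp7
    norm_num at h
    have ha6 : a < 6 := by
      by_contra hc
      push_neg at hc
      have : 216 ≤ a ^ 3 := by calc (216:ℕ) = 6 ^ 3 := by norm_num
                                  _ ≤ a ^ 3 := Nat.pow_le_pow_left hc 3
      omega
    have ha' : a = 5 := by omega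
    subst ha'
    norm_num at h
    have hb6 : b < 6 := by
      by_contra hc
      push_neg at hc
      have : 216 ≤ b ^ 3 := by calc (216:ℕ) = 6 ^ 3 := by norm_num
                                  _ ≤ b ^ 3 := Nat.pow_le_pow_left hc 3
      omega
    have hb' : b = 5 := by omega
    subst hb'
    norm_num at h
  · -- a = 7
    have h7 : (7:ℕ) ∣ a := (by norm_num : Nat.Prime 7).dvd_of_dvd_pow
      (Nat.dvd_of_mod_eq_zero k)
    have ha7 : a = 7 := ((Nat.prime_dvd_prime_iff_eq (by norm_num) ha).mp h7).symm
    subst ha7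
    exact L378 hp hb hb2 hb3 (by norm_num at h ⊢; omega)
  · -- b = 7
    have h7 : (7:ℕ) ∣ b := (by norm_num : Nat.Prime 7).dvd_of_dvd_pow
      (Nat.dvd_of_mod_eq_zero k)
    have hb7 : b = 7 := ((Nat.prime_dvd_prime_iff_eq (by norm_num) hb).mp h7).symm
    subst hb7
    exact L378 hp ha ha2 ha3 (by norm_num at h ⊢; omega)

/-- no prime cube equals a^3+b^3+c^3+8 with a,b,c odd primes -/
private lemma L8 {p a b c : ℕ} (hp : p.Prime) (ha : a.Prime) (hb : b.Prime) (hc : c.Prime)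
    (ha2 : a ≠ 2) (hb2 : b ≠ 2) (hc2 : c ≠ 2)
    (h : p ^ 3 = a ^ 3 + b ^ 3 + c ^ 3 + 8) : False := by
  have ne3 : ∀ q : ℕ, q.Prime → q ≠ 3 → q % 3 ≠ 0 := by
    intro q hq hq3 hmod
    exact hq3 (((Nat.prime_dvd_prime_iff_eq (by norm_num) hq).mp
      (Nat.dvd_of_mod_eq_zero hmod)).symm)
  by_cases ha3 : a = 3 <;> by_cases hb3 : b = 3 <;> by_cases hc3 : c = 3
  · subst ha3; subst hb3; subst hc3
    -- p^3 = 89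
    norm_num at h
    rcases le_or_gt p 4 with h4 | h4
    · have := Nat.pow_le_pow_left h4 3; norm_num at this; omega
    · have : 5 ≤ p := h4
      have := Nat.pow_le_pow_left this 3; norm_num at this; omega
  · subst ha3; subst hb3; exact L62 hp hc hc2 hc3 (by norm_num at h ⊢; omega)
  · subst ha3; subst hc3; exact L62 hp hb hb2 hb3 (by norm_num at h ⊢; omega)
  · subst ha3; exact L35 hp hb hc hb2 hb3 hc2 hc3 (by norm_num at h ⊢; omega)
  · subst hb3; subst hc3; exact L62 hp ha ha2 ha3 (by norm_num at h ⊢; omega)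
  · subst hb3; exact L35 hp ha hc ha2 ha3 hc2 hc3 (by norm_num at h ⊢; omega)
  · subst hc3; exact L35 hp ha hb ha2 ha3 hb2 hb3 (by norm_num at h ⊢; omega)
  · -- none is 3 : mod 9 contradiction
    have ha5 : 5 ≤ a := prime_ge5 ha ha2 ha3
    have ha125 : 125 ≤ a ^ 3 := by calc (125:ℕ) = 5 ^ 3 := by norm_num
                                      _ ≤ a ^ 3 := Nat.pow_le_pow_left ha5 3
    have hp3 : p ≠ 3 := by
      rintro rfl; norm_num at h; omega
    exact mod9key (p ^ 3) (a ^ 3) (b ^ 3) (c ^ 3)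
      (cube_mod9 (ne3 p hp hp3)) (cube_mod9 (ne3 a ha ha3))
      (cube_mod9 (ne3 b hb hb3)) (cube_mod9 (ne3 c hc hc3)) h

private lemma par0 (P A B C D : ℕ) (hP : P % 2 = 1) (hA : A % 2 = 1) (hB : B % 2 = 1)
    (hC : C % 2 = 1) (hD : D % 2 = 1) (h : P = A + B + C + D) : False := by omega

private lemma par2 (P A B : ℕ) (hP : P % 2 = 1) (hA : A % 2 = 1) (hB : B % 2 = 1)
    (h : P = A + B + 16) : False := by omega

private lemma oddcube {n : ℕ} (h : Odd n) : n ^ 3 % 2 = 1 := Nat.odd_iff.mp (h.pow)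

/-- There do not exist primes `p, p1, p2, p3, p4` with
`p³ = p1³ + p2³ + p3³ + p4³`. -/
theorem stmt_1 :
    ¬ ∃ p p1 p2 p3 p4 : ℕ, p.Prime ∧ p1.Prime ∧ p2.Prime ∧ p3.Prime ∧ p4.Prime ∧
      p ^ 3 = p1 ^ 3 + p2 ^ 3 + p3 ^ 3 + p4 ^ 3 := by
  rintro ⟨p, p1, p2, p3, p4, hp, h1, h2, h3, h4, heq⟩
  have c1 : 8 ≤ p1 ^ 3 := by calc (8:ℕ) = 2 ^ 3 := by norm_num
                                _ ≤ p1 ^ 3 := Nat.pow_le_pow_left h1.two_le 3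
  have c2 : 8 ≤ p2 ^ 3 := by calc (8:ℕ) = 2 ^ 3 := by norm_num
                                _ ≤ p2 ^ 3 := Nat.pow_le_pow_left h2.two_le 3
  have c3 : 8 ≤ p3 ^ 3 := by calc (8:ℕ) = 2 ^ 3 := by norm_num
                                _ ≤ p3 ^ 3 := Nat.pow_le_pow_left h3.two_le 3
  have c4 : 8 ≤ p4 ^ 3 := by calc (8:ℕ) = 2 ^ 3 := by norm_num
                                _ ≤ p4 ^ 3 := Nat.pow_le_pow_left h4.two_le 3
  have hp2 : p ≠ 2 := by rintro rfl; norm_num at heq; omega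
  have hpo : p % 2 = 1 := Nat.odd_iff.mp (hp.odd_of_ne_two hp2)
  have hP : p ^ 3 % 2 = 1 := oddcube (hp.odd_of_ne_two hp2)
  rcases h1.eq_two_or_odd' with rfl | o1 <;>
    rcases h2.eq_two_or_odd' with rfl | o2 <;>
    rcases h3.eq_two_or_odd' with rfl | o3 <;>
    rcases h4.eq_two_or_odd' with rfl | o4
  · -- 2 2 2 2 : p^3 = 32
    norm_num at heq
    rcases le_or_gt p 3 with h' | h'
    · have := Nat.pow_le_pow_left h' 3; norm_num at this; omega
    · have : 4 ≤ p := h'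
      have := Nat.pow_le_pow_left this 3; norm_num at this; omega
  · -- 2 2 2 o
    exact L24 hp h4 (odd_ne_two o4) (by norm_num at heq ⊢; omega)
  · exact L24 hp h3 (odd_ne_two o3) (by norm_num at heq ⊢; omega)
  · exact par2 (p ^ 3) (p3 ^ 3) (p4 ^ 3) hP (oddcube o3) (oddcube o4)
      (by norm_num at heq ⊢; omega)
  · exact L24 hp h2 (odd_ne_two o2) (by norm_num at heq ⊢; omega)
  · exact par2 (p ^ 3) (p2 ^ 3) (p4 ^ 3) hP (oddcube o2) (oddcube o4)
      (by norm_num at heq ⊢; omega)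
  · exact par2 (p ^ 3) (p2 ^ 3) (p3 ^ 3) hP (oddcube o2) (oddcube o3)
      (by norm_num at heq ⊢; omega)
  · exact L8 hp h2 h3 h4 (odd_ne_two o2) (odd_ne_two o3) (odd_ne_two o4)
      (by norm_num at heq ⊢; omega)
  · exact L24 hp h1 (odd_ne_two o1) (by norm_num at heq ⊢; omega)
  · exact par2 (p ^ 3) (p1 ^ 3) (p4 ^ 3) hP (oddcube o1) (oddcube o4)
      (by norm_num at heq ⊢; omega)
  · exact par2 (p ^ 3) (p1 ^ 3) (p3 ^ 3) hP (oddcube o1) (oddcube o3)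
      (by norm_num at heq ⊢; omega)
  · exact L8 hp h1 h3 h4 (odd_ne_two o1) (odd_ne_two o3) (odd_ne_two o4)
      (by norm_num at heq ⊢; omega)
  · exact par2 (p ^ 3) (p1 ^ 3) (p2 ^ 3) hP (oddcube o1) (oddcube o2)
      (by norm_num at heq ⊢; omega)
  · exact L8 hp h1 h2 h4 (odd_ne_two o1) (odd_ne_two o2) (odd_ne_two o4)
      (by norm_num at heq ⊢; omega)
  · exact L8 hp h1 h2 h3 (odd_ne_two o1) (odd_ne_two o2) (odd_ne_two o3)
      (by norm_num at heq ⊢; omega)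
  · exact par0 (p ^ 3) (p1 ^ 3) (p2 ^ 3) (p3 ^ 3) (p4 ^ 3) hP (oddcube o1) (oddcube o2)
      (oddcube o3) (oddcube o4) heq
end

section
/- There do not exist prime numbers p and q such that p³ = 3q³ + 8; equivalently, there are no primes p, q with (p − 2)(p² + 2p + 4) = 3q³. -/
/-- There do not exist primes `p` and `q` with `p³ = 3q³ + 8`. -/
theorem stmt_2 :
    ¬ ∃ p q : ℕ, p.Prime ∧ q.Prime ∧ p ^ 3 = 3 * q ^ 3 + 8 := by
  rintro ⟨p, q, hp, hq, h⟩
  rcases eq_or_ne q 3 with rfl | hq3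
  · -- p^3 = 89, impossible
    have hle : p ≤ 4 := by
      by_contra hc
      push_neg at hc
      have := Nat.pow_le_pow_left hc 3
      norm_num at this h
      omega
    interval_cases p <;> norm_num at h
  · have hq0 : q % 3 ≠ 0 := by
      intro hmod
      rcases (Nat.Prime.eq_one_or_self_of_dvd hq 3 (Nat.dvd_of_mod_eq_zero hmod)) with h1 | h1 <;> omega
    have hp3 : p ^ 3 % 9 = (p % 9) ^ 3 % 9 := Nat.pow_mod p 3 9
    have hq3' : q ^ 3 % 9 = (q % 9) ^ 3 % 9 := Nat.pow_mod q 3 9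
    have hmm : q % 3 = (q % 9) % 3 := (Nat.mod_mod_of_dvd q (by norm_num)).symm
    have hma : p % 9 < 9 := Nat.mod_lt _ (by norm_num)
    have hmb : q % 9 < 9 := Nat.mod_lt _ (by norm_num)
    set a := p % 9 with ha
    set b := q % 9 with hb
    interval_cases a <;> interval_cases b <;> norm_num at hp3 hq3' hmm <;> omega
end
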